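/- Bipartite positivity of oblate stabilizer theory at the level of generators: for every d in {ω ⊗ ω' : ω, ω' ∈ Ω} ∪ Φ and every p in {R ω R† ⊗ R ω' R† : ω, ω' ∈ Ω} ∪ Φ, the pairing satisfies Re(tr(d · p)) ≥ 0. -/
import Mathlib


open Matrix Kronecker Complex

noncomputable section

/-- The Pauli matrices indexed by ℤ₄. -/
def pauli : ZMod 4 → Matrix (Fin 2) (Fin 2) ℂ := fun μ =>
  if μ = 0 then 1
  else if μ = 1 then !![0, 1; 1, 0]
  else if μ = 2 then !![0, -Complex.I; Complex.I, 0]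
  else !![1, 0; 0, -1]

/-- The rotation R = diag(e^{-iπ/8}, e^{iπ/8}). -/
def R : Matrix (Fin 2) (Fin 2) ℂ :=
  !![Complex.exp (-(Real.pi / 8 : ℝ) * Complex.I), 0;
     0, Complex.exp ((Real.pi / 8 : ℝ) * Complex.I)]

/-- The Bell vector |Φ⁺⟩ = (|00⟩+|11⟩)/√2. -/
def bell : Fin 2 × Fin 2 → ℂ := fun p =>
  if p.1 = p.2 then ((Real.sqrt 2 : ℝ) : ℂ)⁻¹ else 0

/-- The Bell projector P_Φ = |Φ⁺⟩⟨Φ⁺|. -/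
def PΦ : Matrix (Fin 2 × Fin 2) (Fin 2 × Fin 2) ℂ :=
  Matrix.of fun p q => bell p * (starRingEnd ℂ) (bell q)

/-- Φ⁺_{μ,m} = ((σ_μ R^m)† ⊗ I) P_Φ ((σ_μ R^m) ⊗ I). -/
def PhiProj (μ : ZMod 4) (m : ZMod 8) : Matrix (Fin 2 × Fin 2) (Fin 2 × Fin 2) ℂ :=
  ((pauli μ * R ^ m.val)ᴴ ⊗ₖ (1 : Matrix (Fin 2) (Fin 2) ℂ)) * PΦ *
    ((pauli μ * R ^ m.val) ⊗ₖ (1 : Matrix (Fin 2) (Fin 2) ℂ))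

/-- r = 2^{1/4}. -/
def r : ℝ := (2 : ℝ) ^ ((1 : ℝ) / 4)

/-- The stretched stabilizer states Ω. -/
def Ω : Set (Matrix (Fin 2) (Fin 2) ℂ) :=
  { (1 / 2 : ℂ) • (1 + (r : ℂ) • pauli 1),
    (1 / 2 : ℂ) • (1 - (r : ℂ) • pauli 1),
    (1 / 2 : ℂ) • (1 + (r : ℂ) • pauli 2),
    (1 / 2 : ℂ) • (1 - (r : ℂ) • pauli 2),
    (1 / 2 : ℂ) • (1 + pauli 3),
    (1 / 2 : ℂ) • (1 - pauli 3) }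

/-- The set Φ of entangled states/effects. -/
def PhiSet : Set (Matrix (Fin 2 × Fin 2) (Fin 2 × Fin 2) ℂ) :=
  { Q | ∃ μ : ZMod 4, ∃ m : ZMod 8, m ∈ ({1, 3, 5, 7} : Set (ZMod 8)) ∧ Q = PhiProj μ m }

/-- Place a 4×4 matrix `Q` on tensor factors (2,3) of (ℂ²)⊗⁴ (identity on factors 1 and 4). -/
def mid (Q : Matrix (Fin 2 × Fin 2) (Fin 2 × Fin 2) ℂ) :
    Matrix ((Fin 2 × Fin 2) × (Fin 2 × Fin 2)) ((Fin 2 × Fin 2) × (Fin 2 × Fin 2)) ℂ :=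
  Matrix.of fun p q =>
    (1 : Matrix (Fin 2) (Fin 2) ℂ) p.1.1 q.1.1 *
      Q (p.1.2, p.2.1) (q.1.2, q.2.1) *
      (1 : Matrix (Fin 2) (Fin 2) ℂ) p.2.2 q.2.2

/-- Partial trace over the first tensor factor of ℂ² ⊗ ℂ². -/
def ptr1 (M : Matrix (Fin 2 × Fin 2) (Fin 2 × Fin 2) ℂ) : Matrix (Fin 2) (Fin 2) ℂ :=
  Matrix.of fun i j => ∑ a : Fin 2, M (a, i) (a, j)

/-- Partial trace over the second tensor factor of ℂ² ⊗ ℂ². -/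
def ptr2 (M : Matrix (Fin 2 × Fin 2) (Fin 2 × Fin 2) ℂ) : Matrix (Fin 2) (Fin 2) ℂ :=
  Matrix.of fun i j => ∑ a : Fin 2, M (i, a) (j, a)

/-- Partial trace over the second and third tensor factors of (ℂ²)⊗⁴. -/
def ptr23
    (M : Matrix ((Fin 2 × Fin 2) × (Fin 2 × Fin 2)) ((Fin 2 × Fin 2) × (Fin 2 × Fin 2)) ℂ) :
    Matrix (Fin 2 × Fin 2) (Fin 2 × Fin 2) ℂ :=
  Matrix.of fun p q => ∑ b : Fin 2, ∑ c : Fin 2, M ((p.1, b), (c, p.2)) ((q.1, b), (c, q.2))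

end

section AUX
open Matrix Kronecker Complex

lemma pauli0 : pauli 0 = 1 := by
  show (if (0:ZMod 4) = 0 then _ else _) = _
  rw [if_pos rfl]
lemma pauli1 : pauli 1 = !![0, 1; 1, 0] := by
  show (if (1:ZMod 4) = 0 then _ else _) = _
  rw [if_neg (by decide), if_pos rfl]
lemma pauli2 : pauli 2 = !![0, -Complex.I; Complex.I, 0] := by
  show (if (2:ZMod 4) = 0 then _ else _) = _
  rw [if_neg (by decide), if_neg (by decide), if_pos rfl]
lemma pauli3 : pauli 3 = !![1, 0; 0, -1] := by
  show (if (3:ZMod 4) = 0 then _ else _) = _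
  rw [if_neg (by decide), if_neg (by decide), if_neg (by decide)]

lemma wE1 : (1 / 2 : ℂ) • (1 + (r : ℂ) • pauli 1) = !![1/2, (r:ℂ)/2; (r:ℂ)/2, 1/2] := by
  rw [pauli1, Matrix.one_fin_two]
  ext a b
  fin_cases a <;> fin_cases b <;> simp <;> ring
lemma wE2 : (1 / 2 : ℂ) • (1 - (r : ℂ) • pauli 1) = !![1/2, -((r:ℂ)/2); -((r:ℂ)/2), 1/2] := by
  rw [pauli1, Matrix.one_fin_two]
  ext a b
  fin_cases a <;> fin_cases b <;> simp <;> ring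
lemma wE3 : (1 / 2 : ℂ) • (1 + (r : ℂ) • pauli 2)
    = !![1/2, -((r:ℂ) * Complex.I/2); (r:ℂ) * Complex.I/2, 1/2] := by
  rw [pauli2, Matrix.one_fin_two]
  ext a b
  fin_cases a <;> fin_cases b <;> simp <;> ring
lemma wE4 : (1 / 2 : ℂ) • (1 - (r : ℂ) • pauli 2)
    = !![1/2, (r:ℂ) * Complex.I/2; -((r:ℂ) * Complex.I/2), 1/2] := by
  rw [pauli2, Matrix.one_fin_two]
  ext a b
  fin_cases a <;> fin_cases b <;> simp <;> ring
lemma wE5 : (1 / 2 : ℂ) • (1 + pauli 3) = !![1, 0; 0, 0] := by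
  rw [pauli3, Matrix.one_fin_two]
  ext a b
  fin_cases a <;> fin_cases b <;> simp <;> ring
lemma wE6 : (1 / 2 : ℂ) • (1 - pauli 3) = !![0, 0; 0, 1] := by
  rw [pauli3, Matrix.one_fin_two]
  ext a b
  fin_cases a <;> fin_cases b <;> simp <;> ring

lemma omega_cases {ω : Matrix (Fin 2) (Fin 2) ℂ} (h : ω ∈ Ω) :
    ω = !![1/2, (r:ℂ)/2; (r:ℂ)/2, 1/2] ∨
    ω = !![1/2, -((r:ℂ)/2); -((r:ℂ)/2), 1/2] ∨
    ω = !![1/2, -((r:ℂ) * Complex.I/2); (r:ℂ) * Complex.I/2, 1/2] ∨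
    ω = !![1/2, (r:ℂ) * Complex.I/2; -((r:ℂ) * Complex.I/2), 1/2] ∨
    ω = !![1, 0; 0, 0] ∨
    ω = !![0, 0; 0, 1] := by
  rw [Ω, Set.mem_insert_iff, Set.mem_insert_iff, Set.mem_insert_iff, Set.mem_insert_iff,
    Set.mem_insert_iff, Set.mem_singleton_iff, wE1, wE2, wE3, wE4, wE5, wE6] at h
  exact h

lemma memΩ1 : !![1/2, (r:ℂ)/2; (r:ℂ)/2, 1/2] ∈ Ω := by
  rw [← wE1]; exact Set.mem_insert _ _
lemma memΩ2 : !![1/2, -((r:ℂ)/2); -((r:ℂ)/2), 1/2] ∈ Ω := by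
  rw [← wE2, Ω]; right; exact Set.mem_insert _ _
lemma memΩ3 : !![1/2, -((r:ℂ) * Complex.I/2); (r:ℂ) * Complex.I/2, 1/2] ∈ Ω := by
  rw [← wE3, Ω]; right; right; exact Set.mem_insert _ _
lemma memΩ4 : !![1/2, (r:ℂ) * Complex.I/2; -((r:ℂ) * Complex.I/2), 1/2] ∈ Ω := by
  rw [← wE4, Ω]; right; right; right; exact Set.mem_insert _ _
lemma memΩ5 : !![1, 0; 0, 0] ∈ Ω := by
  rw [← wE5, Ω]; right; right; right; right; exact Set.mem_insert _ _
lemma memΩ6 : !![0, 0; 0, 1] ∈ Ω := by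
  rw [← wE6, Ω]; right; right; right; right; right; rfl

end AUX
section AUX2
open Matrix Kronecker Complex

lemma he12 : Complex.exp (-(Real.pi / 8 : ℝ) * Complex.I) *
    Complex.exp ((Real.pi / 8 : ℝ) * Complex.I) = 1 := by
  rw [← Complex.exp_add]; ring_nf; exact Complex.exp_zero

lemma he11 : Complex.exp (-(Real.pi / 8 : ℝ) * Complex.I) *
    Complex.exp (-(Real.pi / 8 : ℝ) * Complex.I)
    = (Real.sqrt 2 : ℂ) / 2 * (1 - Complex.I) := by
  rw [← Complex.exp_add]
  have : (-(Real.pi / 8 : ℝ) : ℂ) * Complex.I + (-(Real.pi / 8 : ℝ) : ℂ) * Complex.I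
      = ((-(Real.pi / 4) : ℝ) : ℂ) * Complex.I := by push_cast; ring
  rw [this, Complex.exp_mul_I, ← Complex.ofReal_cos, ← Complex.ofReal_sin,
    Real.cos_neg, Real.sin_neg, Real.cos_pi_div_four, Real.sin_pi_div_four]
  push_cast; ring

lemma he22 : Complex.exp ((Real.pi / 8 : ℝ) * Complex.I) *
    Complex.exp ((Real.pi / 8 : ℝ) * Complex.I)
    = (Real.sqrt 2 : ℂ) / 2 * (1 + Complex.I) := by
  rw [← Complex.exp_add]
  have : ((Real.pi / 8 : ℝ) : ℂ) * Complex.I + ((Real.pi / 8 : ℝ) : ℂ) * Complex.I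
      = (((Real.pi / 4) : ℝ) : ℂ) * Complex.I := by push_cast; ring
  rw [this, Complex.exp_mul_I, ← Complex.ofReal_cos, ← Complex.ofReal_sin,
    Real.cos_pi_div_four, Real.sin_pi_div_four]
  push_cast; ring

lemma RH_eq : Rᴴ = !![Complex.exp ((Real.pi / 8 : ℝ) * Complex.I), 0;
     0, Complex.exp (-(Real.pi / 8 : ℝ) * Complex.I)] := by
  have c1 : (starRingEnd ℂ) (Complex.exp (-(Real.pi / 8 : ℝ) * Complex.I))
      = Complex.exp ((Real.pi / 8 : ℝ) * Complex.I) := by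
    rw [← Complex.exp_conj]
    congr 1
    simp [map_div₀, Complex.conj_ofReal, map_ofNat]
  have c2 : (starRingEnd ℂ) (Complex.exp ((Real.pi / 8 : ℝ) * Complex.I))
      = Complex.exp (-(Real.pi / 8 : ℝ) * Complex.I) := by
    rw [← Complex.exp_conj]
    congr 1
    simp [map_div₀, Complex.conj_ofReal, map_ofNat]
  ext i j
  fin_cases i <;> fin_cases j <;>
    simp only [R, Matrix.conjTranspose_apply, Complex.star_def, Fin.zero_eta, Fin.mk_one,
      Matrix.of_apply, Matrix.cons_val', Matrix.cons_val_zero, Matrix.cons_val_one,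
      Matrix.head_cons, Matrix.empty_val', Matrix.cons_val_fin_one, Matrix.head_fin_const,
      c1, c2, map_zero]

lemma traceRconj (x y z w x' y' z' w' : ℂ) :
    Matrix.trace (!![x', y'; z', w'] * (R * !![x, y; z, w] * Rᴴ))
      = x' * x + w' * w + y' * z * ((Real.sqrt 2 : ℂ) / 2 * (1 + Complex.I))
        + z' * y * ((Real.sqrt 2 : ℂ) / 2 * (1 - Complex.I)) := by
  rw [RH_eq]
  show Matrix.trace (_ * (R * _ * _)) = _
  rw [R, Matrix.mul_fin_two, Matrix.mul_fin_two, Matrix.mul_fin_two, Matrix.trace_fin_two]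
  simp only [Matrix.of_apply, Matrix.cons_val', Matrix.cons_val_zero, Matrix.cons_val_one,
    Matrix.head_cons, Matrix.empty_val', Matrix.cons_val_fin_one, Matrix.head_fin_const]
  linear_combination (x' * x + w' * w) * he12 + z' * y * he11 + y' * z * he22

lemma hrr : (r : ℂ) * (r : ℂ) = ((Real.sqrt 2 : ℝ) : ℂ) := by
  have : (r : ℝ) * r = Real.sqrt 2 := by
    rw [r, ← Real.rpow_add (by norm_num), Real.sqrt_eq_rpow]
    norm_num
  rw [← Complex.ofReal_mul, this]

lemma hs2 : ((Real.sqrt 2 : ℝ) : ℂ) * ((Real.sqrt 2 : ℝ) : ℂ) = 2 := by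
  rw [← Complex.ofReal_mul, Real.mul_self_sqrt (by norm_num)]
  norm_num

end AUX2
section AUX3
open Matrix Kronecker Complex
set_option maxHeartbeats 1000000 in
lemma L4 {om1 om2 : Matrix (Fin 2) (Fin 2) ℂ} (h2 : om2 ∈ Ω) (h1 : om1 ∈ Ω) :
    ∃ t : ℝ, 0 ≤ t ∧ Matrix.trace (om2 * (R * om1 * Rᴴ)) = (t : ℂ) := by
  rcases omega_cases h2 with rfl|rfl|rfl|rfl|rfl|rfl <;>
    rcases omega_cases h1 with rfl|rfl|rfl|rfl|rfl|rfl
  · exact ⟨(1 : ℝ), by norm_num, by rw [traceRconj]; push_cast; linear_combination ((1/4 : ℂ) * ((Real.sqrt 2 : ℝ) : ℂ)) * hrr + ((1/4 : ℂ)) * hs2⟩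
  · exact ⟨(0 : ℝ), by norm_num, by rw [traceRconj]; push_cast; linear_combination ((-1/4 : ℂ) * ((Real.sqrt 2 : ℝ) : ℂ)) * hrr + ((-1/4 : ℂ)) * hs2⟩
  · exact ⟨(0 : ℝ), by norm_num, by rw [traceRconj]; push_cast; linear_combination ((-1/4 : ℂ) * ((Real.sqrt 2 : ℝ) : ℂ)) * hrr + ((-1/4 : ℂ)) * hs2 + ((1/4 : ℂ) * (r:ℂ) * (r:ℂ) * ((Real.sqrt 2 : ℝ) : ℂ)) * Complex.I_mul_I⟩
  · exact ⟨(1 : ℝ), by norm_num, by rw [traceRconj]; push_cast; linear_combination ((1/4 : ℂ) * ((Real.sqrt 2 : ℝ) : ℂ)) * hrr + ((1/4 : ℂ)) * hs2 + ((-1/4 : ℂ) * (r:ℂ) * (r:ℂ) * ((Real.sqrt 2 : ℝ) : ℂ)) * Complex.I_mul_I⟩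
  · exact ⟨(1/2 : ℝ), by norm_num, by rw [traceRconj]; push_cast; ring⟩
  · exact ⟨(1/2 : ℝ), by norm_num, by rw [traceRconj]; push_cast; ring⟩
  · exact ⟨(0 : ℝ), by norm_num, by rw [traceRconj]; push_cast; linear_combination ((-1/4 : ℂ) * ((Real.sqrt 2 : ℝ) : ℂ)) * hrr + ((-1/4 : ℂ)) * hs2⟩
  · exact ⟨(1 : ℝ), by norm_num, by rw [traceRconj]; push_cast; linear_combination ((1/4 : ℂ) * ((Real.sqrt 2 : ℝ) : ℂ)) * hrr + ((1/4 : ℂ)) * hs2⟩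
  · exact ⟨(1 : ℝ), by norm_num, by rw [traceRconj]; push_cast; linear_combination ((1/4 : ℂ) * ((Real.sqrt 2 : ℝ) : ℂ)) * hrr + ((1/4 : ℂ)) * hs2 + ((-1/4 : ℂ) * (r:ℂ) * (r:ℂ) * ((Real.sqrt 2 : ℝ) : ℂ)) * Complex.I_mul_I⟩
  · exact ⟨(0 : ℝ), by norm_num, by rw [traceRconj]; push_cast; linear_combination ((-1/4 : ℂ) * ((Real.sqrt 2 : ℝ) : ℂ)) * hrr + ((-1/4 : ℂ)) * hs2 + ((1/4 : ℂ) * (r:ℂ) * (r:ℂ) * ((Real.sqrt 2 : ℝ) : ℂ)) * Complex.I_mul_I⟩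
  · exact ⟨(1/2 : ℝ), by norm_num, by rw [traceRconj]; push_cast; ring⟩
  · exact ⟨(1/2 : ℝ), by norm_num, by rw [traceRconj]; push_cast; ring⟩
  · exact ⟨(1 : ℝ), by norm_num, by rw [traceRconj]; push_cast; linear_combination ((1/4 : ℂ) * ((Real.sqrt 2 : ℝ) : ℂ)) * hrr + ((1/4 : ℂ)) * hs2 + ((-1/4 : ℂ) * (r:ℂ) * (r:ℂ) * ((Real.sqrt 2 : ℝ) : ℂ)) * Complex.I_mul_I⟩
  · exact ⟨(0 : ℝ), by norm_num, by rw [traceRconj]; push_cast; linear_combination ((-1/4 : ℂ) * ((Real.sqrt 2 : ℝ) : ℂ)) * hrr + ((-1/4 : ℂ)) * hs2 + ((1/4 : ℂ) * (r:ℂ) * (r:ℂ) * ((Real.sqrt 2 : ℝ) : ℂ)) * Complex.I_mul_I⟩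
  · exact ⟨(1 : ℝ), by norm_num, by rw [traceRconj]; push_cast; linear_combination ((1/4 : ℂ) * ((Real.sqrt 2 : ℝ) : ℂ)) * hrr + ((1/4 : ℂ)) * hs2 + ((-1/4 : ℂ) * (r:ℂ) * (r:ℂ) * ((Real.sqrt 2 : ℝ) : ℂ)) * Complex.I_mul_I⟩
  · exact ⟨(0 : ℝ), by norm_num, by rw [traceRconj]; push_cast; linear_combination ((-1/4 : ℂ) * ((Real.sqrt 2 : ℝ) : ℂ)) * hrr + ((-1/4 : ℂ)) * hs2 + ((1/4 : ℂ) * (r:ℂ) * (r:ℂ) * ((Real.sqrt 2 : ℝ) : ℂ)) * Complex.I_mul_I⟩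
  · exact ⟨(1/2 : ℝ), by norm_num, by rw [traceRconj]; push_cast; ring⟩
  · exact ⟨(1/2 : ℝ), by norm_num, by rw [traceRconj]; push_cast; ring⟩
  · exact ⟨(0 : ℝ), by norm_num, by rw [traceRconj]; push_cast; linear_combination ((-1/4 : ℂ) * ((Real.sqrt 2 : ℝ) : ℂ)) * hrr + ((-1/4 : ℂ)) * hs2 + ((1/4 : ℂ) * (r:ℂ) * (r:ℂ) * ((Real.sqrt 2 : ℝ) : ℂ)) * Complex.I_mul_I⟩
  · exact ⟨(1 : ℝ), by norm_num, by rw [traceRconj]; push_cast; linear_combination ((1/4 : ℂ) * ((Real.sqrt 2 : ℝ) : ℂ)) * hrr + ((1/4 : ℂ)) * hs2 + ((-1/4 : ℂ) * (r:ℂ) * (r:ℂ) * ((Real.sqrt 2 : ℝ) : ℂ)) * Complex.I_mul_I⟩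
  · exact ⟨(0 : ℝ), by norm_num, by rw [traceRconj]; push_cast; linear_combination ((-1/4 : ℂ) * ((Real.sqrt 2 : ℝ) : ℂ)) * hrr + ((-1/4 : ℂ)) * hs2 + ((1/4 : ℂ) * (r:ℂ) * (r:ℂ) * ((Real.sqrt 2 : ℝ) : ℂ)) * Complex.I_mul_I⟩
  · exact ⟨(1 : ℝ), by norm_num, by rw [traceRconj]; push_cast; linear_combination ((1/4 : ℂ) * ((Real.sqrt 2 : ℝ) : ℂ)) * hrr + ((1/4 : ℂ)) * hs2 + ((-1/4 : ℂ) * (r:ℂ) * (r:ℂ) * ((Real.sqrt 2 : ℝ) : ℂ)) * Complex.I_mul_I⟩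
  · exact ⟨(1/2 : ℝ), by norm_num, by rw [traceRconj]; push_cast; ring⟩
  · exact ⟨(1/2 : ℝ), by norm_num, by rw [traceRconj]; push_cast; ring⟩
  · exact ⟨(1/2 : ℝ), by norm_num, by rw [traceRconj]; push_cast; ring⟩
  · exact ⟨(1/2 : ℝ), by norm_num, by rw [traceRconj]; push_cast; ring⟩
  · exact ⟨(1/2 : ℝ), by norm_num, by rw [traceRconj]; push_cast; ring⟩
  · exact ⟨(1/2 : ℝ), by norm_num, by rw [traceRconj]; push_cast; ring⟩
  · exact ⟨(1 : ℝ), by norm_num, by rw [traceRconj]; push_cast; ring⟩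
  · exact ⟨(0 : ℝ), by norm_num, by rw [traceRconj]; push_cast; ring⟩
  · exact ⟨(1/2 : ℝ), by norm_num, by rw [traceRconj]; push_cast; ring⟩
  · exact ⟨(1/2 : ℝ), by norm_num, by rw [traceRconj]; push_cast; ring⟩
  · exact ⟨(1/2 : ℝ), by norm_num, by rw [traceRconj]; push_cast; ring⟩
  · exact ⟨(1/2 : ℝ), by norm_num, by rw [traceRconj]; push_cast; ring⟩
  · exact ⟨(0 : ℝ), by norm_num, by rw [traceRconj]; push_cast; ring⟩
  · exact ⟨(1 : ℝ), by norm_num, by rw [traceRconj]; push_cast; ring⟩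
end AUX3
section AUX4
open Matrix Kronecker Complex

lemma R2_eq : R ^ 2 = !![((Real.sqrt 2 : ℝ) : ℂ)/2 * (1 - Complex.I), 0;
    0, ((Real.sqrt 2 : ℝ) : ℂ)/2 * (1 + Complex.I)] := by
  rw [sq, R, Matrix.mul_fin_two]
  ext a b
  fin_cases a <;> fin_cases b <;>
    simp only [Matrix.of_apply, Matrix.cons_val', Matrix.cons_val_zero, Matrix.cons_val_one,
      Matrix.head_cons, Matrix.empty_val', Matrix.cons_val_fin_one, Matrix.head_fin_const,
      Fin.zero_eta, Fin.mk_one]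
  · linear_combination he11
  · ring
  · ring
  · linear_combination he22

lemma R2H_eq : (R ^ 2)ᴴ = !![((Real.sqrt 2 : ℝ) : ℂ)/2 * (1 + Complex.I), 0;
    0, ((Real.sqrt 2 : ℝ) : ℂ)/2 * (1 - Complex.I)] := by
  rw [R2_eq]
  ext a b
  fin_cases a <;> fin_cases b <;>
    simp only [Matrix.conjTranspose_apply, Complex.star_def, _root_.map_mul, map_div₀, map_sub,
      map_add, _root_.map_one, map_ofNat, Complex.conj_I, Complex.conj_ofReal, map_zero, Matrix.of_apply, Matrix.cons_val', Matrix.cons_val_zero, Matrix.cons_val_one,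
      Matrix.head_cons, Matrix.empty_val', Matrix.cons_val_fin_one, Matrix.head_fin_const,
      Fin.zero_eta, Fin.mk_one] <;>
    ring

lemma R2conj1 : R ^ 2 * !![1/2, (r:ℂ)/2; (r:ℂ)/2, 1/2] * (R ^ 2)ᴴ = !![1/2, -((r:ℂ) * Complex.I/2); (r:ℂ) * Complex.I/2, 1/2] := by
  rw [R2H_eq, R2_eq, Matrix.mul_fin_two, Matrix.mul_fin_two]
  ext a b
  fin_cases a <;> fin_cases b <;>
    simp only [Matrix.of_apply, Matrix.cons_val', Matrix.cons_val_zero, Matrix.cons_val_one,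
      Matrix.head_cons, Matrix.empty_val', Matrix.cons_val_fin_one, Matrix.head_fin_const,
      Fin.zero_eta, Fin.mk_one]
  · linear_combination ((1/4 : ℂ)) * hs2 + ((-1/8 : ℂ) * ((Real.sqrt 2 : ℝ) : ℂ) * ((Real.sqrt 2 : ℝ) : ℂ)) * Complex.I_mul_I
  · linear_combination ((-1/4 : ℂ) * (r:ℂ) * Complex.I) * hs2 + ((1/8 : ℂ) * (r:ℂ) * ((Real.sqrt 2 : ℝ) : ℂ) * ((Real.sqrt 2 : ℝ) : ℂ)) * Complex.I_mul_I
  · linear_combination ((1/4 : ℂ) * (r:ℂ) * Complex.I) * hs2 + ((1/8 : ℂ) * (r:ℂ) * ((Real.sqrt 2 : ℝ) : ℂ) * ((Real.sqrt 2 : ℝ) : ℂ)) * Complex.I_mul_I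
  · linear_combination ((1/4 : ℂ)) * hs2 + ((-1/8 : ℂ) * ((Real.sqrt 2 : ℝ) : ℂ) * ((Real.sqrt 2 : ℝ) : ℂ)) * Complex.I_mul_I

lemma R2conj2 : R ^ 2 * !![1/2, -((r:ℂ)/2); -((r:ℂ)/2), 1/2] * (R ^ 2)ᴴ = !![1/2, (r:ℂ) * Complex.I/2; -((r:ℂ) * Complex.I/2), 1/2] := by
  rw [R2H_eq, R2_eq, Matrix.mul_fin_two, Matrix.mul_fin_two]
  ext a b
  fin_cases a <;> fin_cases b <;>
    simp only [Matrix.of_apply, Matrix.cons_val', Matrix.cons_val_zero, Matrix.cons_val_one,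
      Matrix.head_cons, Matrix.empty_val', Matrix.cons_val_fin_one, Matrix.head_fin_const,
      Fin.zero_eta, Fin.mk_one]
  · linear_combination ((1/4 : ℂ)) * hs2 + ((-1/8 : ℂ) * ((Real.sqrt 2 : ℝ) : ℂ) * ((Real.sqrt 2 : ℝ) : ℂ)) * Complex.I_mul_I
  · linear_combination ((1/4 : ℂ) * (r:ℂ) * Complex.I) * hs2 + ((-1/8 : ℂ) * (r:ℂ) * ((Real.sqrt 2 : ℝ) : ℂ) * ((Real.sqrt 2 : ℝ) : ℂ)) * Complex.I_mul_I
  · linear_combination ((-1/4 : ℂ) * (r:ℂ) * Complex.I) * hs2 + ((-1/8 : ℂ) * (r:ℂ) * ((Real.sqrt 2 : ℝ) : ℂ) * ((Real.sqrt 2 : ℝ) : ℂ)) * Complex.I_mul_I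
  · linear_combination ((1/4 : ℂ)) * hs2 + ((-1/8 : ℂ) * ((Real.sqrt 2 : ℝ) : ℂ) * ((Real.sqrt 2 : ℝ) : ℂ)) * Complex.I_mul_I

lemma R2conj3 : R ^ 2 * !![1/2, -((r:ℂ) * Complex.I/2); (r:ℂ) * Complex.I/2, 1/2] * (R ^ 2)ᴴ = !![1/2, -((r:ℂ)/2); -((r:ℂ)/2), 1/2] := by
  rw [R2H_eq, R2_eq, Matrix.mul_fin_two, Matrix.mul_fin_two]
  ext a b
  fin_cases a <;> fin_cases b <;>
    simp only [Matrix.of_apply, Matrix.cons_val', Matrix.cons_val_zero, Matrix.cons_val_one,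
      Matrix.head_cons, Matrix.empty_val', Matrix.cons_val_fin_one, Matrix.head_fin_const,
      Fin.zero_eta, Fin.mk_one]
  · linear_combination ((1/4 : ℂ)) * hs2 + ((-1/8 : ℂ) * ((Real.sqrt 2 : ℝ) : ℂ) * ((Real.sqrt 2 : ℝ) : ℂ)) * Complex.I_mul_I
  · linear_combination ((-1/4 : ℂ) * (r:ℂ)) * hs2 + ((1/4 : ℂ) * (r:ℂ) * ((Real.sqrt 2 : ℝ) : ℂ) * ((Real.sqrt 2 : ℝ) : ℂ) + (-1/8 : ℂ) * (r:ℂ) * ((Real.sqrt 2 : ℝ) : ℂ) * ((Real.sqrt 2 : ℝ) : ℂ) * Complex.I) * Complex.I_mul_I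
  · linear_combination ((-1/4 : ℂ) * (r:ℂ)) * hs2 + ((1/4 : ℂ) * (r:ℂ) * ((Real.sqrt 2 : ℝ) : ℂ) * ((Real.sqrt 2 : ℝ) : ℂ) + (1/8 : ℂ) * (r:ℂ) * ((Real.sqrt 2 : ℝ) : ℂ) * ((Real.sqrt 2 : ℝ) : ℂ) * Complex.I) * Complex.I_mul_I
  · linear_combination ((1/4 : ℂ)) * hs2 + ((-1/8 : ℂ) * ((Real.sqrt 2 : ℝ) : ℂ) * ((Real.sqrt 2 : ℝ) : ℂ)) * Complex.I_mul_I

lemma R2conj4 : R ^ 2 * !![1/2, (r:ℂ) * Complex.I/2; -((r:ℂ) * Complex.I/2), 1/2] * (R ^ 2)ᴴ = !![1/2, (r:ℂ)/2; (r:ℂ)/2, 1/2] := by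
  rw [R2H_eq, R2_eq, Matrix.mul_fin_two, Matrix.mul_fin_two]
  ext a b
  fin_cases a <;> fin_cases b <;>
    simp only [Matrix.of_apply, Matrix.cons_val', Matrix.cons_val_zero, Matrix.cons_val_one,
      Matrix.head_cons, Matrix.empty_val', Matrix.cons_val_fin_one, Matrix.head_fin_const,
      Fin.zero_eta, Fin.mk_one]
  · linear_combination ((1/4 : ℂ)) * hs2 + ((-1/8 : ℂ) * ((Real.sqrt 2 : ℝ) : ℂ) * ((Real.sqrt 2 : ℝ) : ℂ)) * Complex.I_mul_I
  · linear_combination ((1/4 : ℂ) * (r:ℂ)) * hs2 + ((-1/4 : ℂ) * (r:ℂ) * ((Real.sqrt 2 : ℝ) : ℂ) * ((Real.sqrt 2 : ℝ) : ℂ) + (1/8 : ℂ) * (r:ℂ) * ((Real.sqrt 2 : ℝ) : ℂ) * ((Real.sqrt 2 : ℝ) : ℂ) * Complex.I) * Complex.I_mul_I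
  · linear_combination ((1/4 : ℂ) * (r:ℂ)) * hs2 + ((-1/4 : ℂ) * (r:ℂ) * ((Real.sqrt 2 : ℝ) : ℂ) * ((Real.sqrt 2 : ℝ) : ℂ) + (-1/8 : ℂ) * (r:ℂ) * ((Real.sqrt 2 : ℝ) : ℂ) * ((Real.sqrt 2 : ℝ) : ℂ) * Complex.I) * Complex.I_mul_I
  · linear_combination ((1/4 : ℂ)) * hs2 + ((-1/8 : ℂ) * ((Real.sqrt 2 : ℝ) : ℂ) * ((Real.sqrt 2 : ℝ) : ℂ)) * Complex.I_mul_I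

lemma R2conj5 : R ^ 2 * !![1, 0; 0, 0] * (R ^ 2)ᴴ = !![1, 0; 0, 0] := by
  rw [R2H_eq, R2_eq, Matrix.mul_fin_two, Matrix.mul_fin_two]
  ext a b
  fin_cases a <;> fin_cases b <;>
    simp only [Matrix.of_apply, Matrix.cons_val', Matrix.cons_val_zero, Matrix.cons_val_one,
      Matrix.head_cons, Matrix.empty_val', Matrix.cons_val_fin_one, Matrix.head_fin_const,
      Fin.zero_eta, Fin.mk_one]
  · linear_combination ((1/2 : ℂ)) * hs2 + ((-1/4 : ℂ) * ((Real.sqrt 2 : ℝ) : ℂ) * ((Real.sqrt 2 : ℝ) : ℂ)) * Complex.I_mul_I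
  · ring
  · ring
  · ring

lemma R2conj6 : R ^ 2 * !![0, 0; 0, 1] * (R ^ 2)ᴴ = !![0, 0; 0, 1] := by
  rw [R2H_eq, R2_eq, Matrix.mul_fin_two, Matrix.mul_fin_two]
  ext a b
  fin_cases a <;> fin_cases b <;>
    simp only [Matrix.of_apply, Matrix.cons_val', Matrix.cons_val_zero, Matrix.cons_val_one,
      Matrix.head_cons, Matrix.empty_val', Matrix.cons_val_fin_one, Matrix.head_fin_const,
      Fin.zero_eta, Fin.mk_one]
  · ring
  · ring
  · ring
  · linear_combination ((1/2 : ℂ)) * hs2 + ((-1/4 : ℂ) * ((Real.sqrt 2 : ℝ) : ℂ) * ((Real.sqrt 2 : ℝ) : ℂ)) * Complex.I_mul_I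

lemma LbR2 {om : Matrix (Fin 2) (Fin 2) ℂ} (h : om ∈ Ω) : R ^ 2 * om * (R ^ 2)ᴴ ∈ Ω := by
  rcases omega_cases h with rfl|rfl|rfl|rfl|rfl|rfl
  · rw [R2conj1]; exact memΩ3
  · rw [R2conj2]; exact memΩ4
  · rw [R2conj3]; exact memΩ2
  · rw [R2conj4]; exact memΩ1
  · rw [R2conj5]; exact memΩ5
  · rw [R2conj6]; exact memΩ6

lemma LbPow {om : Matrix (Fin 2) (Fin 2) ℂ} (h : om ∈ Ω) :
    ∀ k : ℕ, R ^ (2 * k) * om * (R ^ (2 * k))ᴴ ∈ Ω := by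
  intro k
  induction k generalizing om h with
  | zero => simpa using h
  | succ n ih =>
      have e : R ^ (2 * (n + 1)) = R ^ (2 * n) * R ^ 2 := by
        rw [← pow_add]; ring_nf
      rw [e, Matrix.conjTranspose_mul]
      have e2 : R ^ (2 * n) * R ^ 2 * om * ((R ^ 2)ᴴ * (R ^ (2 * n))ᴴ)
          = R ^ (2 * n) * (R ^ 2 * om * (R ^ 2)ᴴ) * (R ^ (2 * n))ᴴ := by
        simp only [Matrix.mul_assoc]
      rw [e2]
      exact ih (LbR2 h)

end AUX4
section AUX5
open Matrix Kronecker Complex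

lemma Tlem1 : (!![1/2, (r:ℂ)/2; (r:ℂ)/2, 1/2])ᵀ = !![1/2, (r:ℂ)/2; (r:ℂ)/2, 1/2] := by
  ext a b
  fin_cases a <;> fin_cases b <;> rfl

lemma Tlem2 : (!![1/2, -((r:ℂ)/2); -((r:ℂ)/2), 1/2])ᵀ = !![1/2, -((r:ℂ)/2); -((r:ℂ)/2), 1/2] := by
  ext a b
  fin_cases a <;> fin_cases b <;> rfl

lemma Tlem3 : (!![1/2, -((r:ℂ) * Complex.I/2); (r:ℂ) * Complex.I/2, 1/2])ᵀ = !![1/2, (r:ℂ) * Complex.I/2; -((r:ℂ) * Complex.I/2), 1/2] := by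
  ext a b
  fin_cases a <;> fin_cases b <;> rfl

lemma Tlem4 : (!![1/2, (r:ℂ) * Complex.I/2; -((r:ℂ) * Complex.I/2), 1/2])ᵀ = !![1/2, -((r:ℂ) * Complex.I/2); (r:ℂ) * Complex.I/2, 1/2] := by
  ext a b
  fin_cases a <;> fin_cases b <;> rfl

lemma Tlem5 : (!![1, 0; 0, 0] : Matrix (Fin 2) (Fin 2) ℂ)ᵀ = !![1, 0; 0, 0] := by
  ext a b
  fin_cases a <;> fin_cases b <;> rfl

lemma Tlem6 : (!![0, 0; 0, 1] : Matrix (Fin 2) (Fin 2) ℂ)ᵀ = !![0, 0; 0, 1] := by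
  ext a b
  fin_cases a <;> fin_cases b <;> rfl

lemma transΩ {om : Matrix (Fin 2) (Fin 2) ℂ} (h : om ∈ Ω) : omᵀ ∈ Ω := by
  rcases omega_cases h with rfl|rfl|rfl|rfl|rfl|rfl
  · rw [Tlem1]; exact memΩ1
  · rw [Tlem2]; exact memΩ2
  · rw [Tlem3]; exact memΩ4
  · rw [Tlem4]; exact memΩ3
  · rw [Tlem5]; exact memΩ5
  · rw [Tlem6]; exact memΩ6

lemma Sconj0_1 : pauli 0 * !![1/2, (r:ℂ)/2; (r:ℂ)/2, 1/2] * pauli 0 = !![1/2, (r:ℂ)/2; (r:ℂ)/2, 1/2] := by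
  rw [pauli0, Matrix.one_mul, Matrix.mul_one]

lemma Sconj0_2 : pauli 0 * !![1/2, -((r:ℂ)/2); -((r:ℂ)/2), 1/2] * pauli 0 = !![1/2, -((r:ℂ)/2); -((r:ℂ)/2), 1/2] := by
  rw [pauli0, Matrix.one_mul, Matrix.mul_one]

lemma Sconj0_3 : pauli 0 * !![1/2, -((r:ℂ) * Complex.I/2); (r:ℂ) * Complex.I/2, 1/2] * pauli 0 = !![1/2, -((r:ℂ) * Complex.I/2); (r:ℂ) * Complex.I/2, 1/2] := by
  rw [pauli0, Matrix.one_mul, Matrix.mul_one]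

lemma Sconj0_4 : pauli 0 * !![1/2, (r:ℂ) * Complex.I/2; -((r:ℂ) * Complex.I/2), 1/2] * pauli 0 = !![1/2, (r:ℂ) * Complex.I/2; -((r:ℂ) * Complex.I/2), 1/2] := by
  rw [pauli0, Matrix.one_mul, Matrix.mul_one]

lemma Sconj0_5 : pauli 0 * !![1, 0; 0, 0] * pauli 0 = !![1, 0; 0, 0] := by
  rw [pauli0, Matrix.one_mul, Matrix.mul_one]

lemma Sconj0_6 : pauli 0 * !![0, 0; 0, 1] * pauli 0 = !![0, 0; 0, 1] := by
  rw [pauli0, Matrix.one_mul, Matrix.mul_one]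

lemma Sconj1_1 : pauli 1 * !![1/2, (r:ℂ)/2; (r:ℂ)/2, 1/2] * pauli 1 = !![1/2, (r:ℂ)/2; (r:ℂ)/2, 1/2] := by
  rw [pauli1, Matrix.mul_fin_two, Matrix.mul_fin_two]
  ext a b
  fin_cases a <;> fin_cases b <;>
    simp only [Matrix.of_apply, Matrix.cons_val', Matrix.cons_val_zero, Matrix.cons_val_one,
      Matrix.head_cons, Matrix.empty_val', Matrix.cons_val_fin_one, Matrix.head_fin_const,
      Fin.zero_eta, Fin.mk_one]
  · ring
  · ring
  · ring
  · ring

lemma Sconj1_2 : pauli 1 * !![1/2, -((r:ℂ)/2); -((r:ℂ)/2), 1/2] * pauli 1 = !![1/2, -((r:ℂ)/2); -((r:ℂ)/2), 1/2] := by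
  rw [pauli1, Matrix.mul_fin_two, Matrix.mul_fin_two]
  ext a b
  fin_cases a <;> fin_cases b <;>
    simp only [Matrix.of_apply, Matrix.cons_val', Matrix.cons_val_zero, Matrix.cons_val_one,
      Matrix.head_cons, Matrix.empty_val', Matrix.cons_val_fin_one, Matrix.head_fin_const,
      Fin.zero_eta, Fin.mk_one]
  · ring
  · ring
  · ring
  · ring

lemma Sconj1_3 : pauli 1 * !![1/2, -((r:ℂ) * Complex.I/2); (r:ℂ) * Complex.I/2, 1/2] * pauli 1 = !![1/2, (r:ℂ) * Complex.I/2; -((r:ℂ) * Complex.I/2), 1/2] := by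
  rw [pauli1, Matrix.mul_fin_two, Matrix.mul_fin_two]
  ext a b
  fin_cases a <;> fin_cases b <;>
    simp only [Matrix.of_apply, Matrix.cons_val', Matrix.cons_val_zero, Matrix.cons_val_one,
      Matrix.head_cons, Matrix.empty_val', Matrix.cons_val_fin_one, Matrix.head_fin_const,
      Fin.zero_eta, Fin.mk_one]
  · ring
  · ring
  · ring
  · ring

lemma Sconj1_4 : pauli 1 * !![1/2, (r:ℂ) * Complex.I/2; -((r:ℂ) * Complex.I/2), 1/2] * pauli 1 = !![1/2, -((r:ℂ) * Complex.I/2); (r:ℂ) * Complex.I/2, 1/2] := by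
  rw [pauli1, Matrix.mul_fin_two, Matrix.mul_fin_two]
  ext a b
  fin_cases a <;> fin_cases b <;>
    simp only [Matrix.of_apply, Matrix.cons_val', Matrix.cons_val_zero, Matrix.cons_val_one,
      Matrix.head_cons, Matrix.empty_val', Matrix.cons_val_fin_one, Matrix.head_fin_const,
      Fin.zero_eta, Fin.mk_one]
  · ring
  · ring
  · ring
  · ring

lemma Sconj1_5 : pauli 1 * !![1, 0; 0, 0] * pauli 1 = !![0, 0; 0, 1] := by
  rw [pauli1, Matrix.mul_fin_two, Matrix.mul_fin_two]
  ext a b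
  fin_cases a <;> fin_cases b <;>
    simp only [Matrix.of_apply, Matrix.cons_val', Matrix.cons_val_zero, Matrix.cons_val_one,
      Matrix.head_cons, Matrix.empty_val', Matrix.cons_val_fin_one, Matrix.head_fin_const,
      Fin.zero_eta, Fin.mk_one]
  · ring
  · ring
  · ring
  · ring

lemma Sconj1_6 : pauli 1 * !![0, 0; 0, 1] * pauli 1 = !![1, 0; 0, 0] := by
  rw [pauli1, Matrix.mul_fin_two, Matrix.mul_fin_two]
  ext a b
  fin_cases a <;> fin_cases b <;>
    simp only [Matrix.of_apply, Matrix.cons_val', Matrix.cons_val_zero, Matrix.cons_val_one,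
      Matrix.head_cons, Matrix.empty_val', Matrix.cons_val_fin_one, Matrix.head_fin_const,
      Fin.zero_eta, Fin.mk_one]
  · ring
  · ring
  · ring
  · ring

lemma Sconj2_1 : pauli 2 * !![1/2, (r:ℂ)/2; (r:ℂ)/2, 1/2] * pauli 2 = !![1/2, -((r:ℂ)/2); -((r:ℂ)/2), 1/2] := by
  rw [pauli2, Matrix.mul_fin_two, Matrix.mul_fin_two]
  ext a b
  fin_cases a <;> fin_cases b <;>
    simp only [Matrix.of_apply, Matrix.cons_val', Matrix.cons_val_zero, Matrix.cons_val_one,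
      Matrix.head_cons, Matrix.empty_val', Matrix.cons_val_fin_one, Matrix.head_fin_const,
      Fin.zero_eta, Fin.mk_one]
  · linear_combination ((-1/2 : ℂ)) * Complex.I_mul_I
  · linear_combination ((1/2 : ℂ) * (r:ℂ)) * Complex.I_mul_I
  · linear_combination ((1/2 : ℂ) * (r:ℂ)) * Complex.I_mul_I
  · linear_combination ((-1/2 : ℂ)) * Complex.I_mul_I

lemma Sconj2_2 : pauli 2 * !![1/2, -((r:ℂ)/2); -((r:ℂ)/2), 1/2] * pauli 2 = !![1/2, (r:ℂ)/2; (r:ℂ)/2, 1/2] := by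
  rw [pauli2, Matrix.mul_fin_two, Matrix.mul_fin_two]
  ext a b
  fin_cases a <;> fin_cases b <;>
    simp only [Matrix.of_apply, Matrix.cons_val', Matrix.cons_val_zero, Matrix.cons_val_one,
      Matrix.head_cons, Matrix.empty_val', Matrix.cons_val_fin_one, Matrix.head_fin_const,
      Fin.zero_eta, Fin.mk_one]
  · linear_combination ((-1/2 : ℂ)) * Complex.I_mul_I
  · linear_combination ((-1/2 : ℂ) * (r:ℂ)) * Complex.I_mul_I
  · linear_combination ((-1/2 : ℂ) * (r:ℂ)) * Complex.I_mul_I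
  · linear_combination ((-1/2 : ℂ)) * Complex.I_mul_I

lemma Sconj2_3 : pauli 2 * !![1/2, -((r:ℂ) * Complex.I/2); (r:ℂ) * Complex.I/2, 1/2] * pauli 2 = !![1/2, -((r:ℂ) * Complex.I/2); (r:ℂ) * Complex.I/2, 1/2] := by
  rw [pauli2, Matrix.mul_fin_two, Matrix.mul_fin_two]
  ext a b
  fin_cases a <;> fin_cases b <;>
    simp only [Matrix.of_apply, Matrix.cons_val', Matrix.cons_val_zero, Matrix.cons_val_one,
      Matrix.head_cons, Matrix.empty_val', Matrix.cons_val_fin_one, Matrix.head_fin_const,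
      Fin.zero_eta, Fin.mk_one]
  · linear_combination ((-1/2 : ℂ)) * Complex.I_mul_I
  · linear_combination ((1/2 : ℂ) * (r:ℂ) * Complex.I) * Complex.I_mul_I
  · linear_combination ((-1/2 : ℂ) * (r:ℂ) * Complex.I) * Complex.I_mul_I
  · linear_combination ((-1/2 : ℂ)) * Complex.I_mul_I

lemma Sconj2_4 : pauli 2 * !![1/2, (r:ℂ) * Complex.I/2; -((r:ℂ) * Complex.I/2), 1/2] * pauli 2 = !![1/2, (r:ℂ) * Complex.I/2; -((r:ℂ) * Complex.I/2), 1/2] := by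
  rw [pauli2, Matrix.mul_fin_two, Matrix.mul_fin_two]
  ext a b
  fin_cases a <;> fin_cases b <;>
    simp only [Matrix.of_apply, Matrix.cons_val', Matrix.cons_val_zero, Matrix.cons_val_one,
      Matrix.head_cons, Matrix.empty_val', Matrix.cons_val_fin_one, Matrix.head_fin_const,
      Fin.zero_eta, Fin.mk_one]
  · linear_combination ((-1/2 : ℂ)) * Complex.I_mul_I
  · linear_combination ((-1/2 : ℂ) * (r:ℂ) * Complex.I) * Complex.I_mul_I
  · linear_combination ((1/2 : ℂ) * (r:ℂ) * Complex.I) * Complex.I_mul_I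
  · linear_combination ((-1/2 : ℂ)) * Complex.I_mul_I

lemma Sconj2_5 : pauli 2 * !![1, 0; 0, 0] * pauli 2 = !![0, 0; 0, 1] := by
  rw [pauli2, Matrix.mul_fin_two, Matrix.mul_fin_two]
  ext a b
  fin_cases a <;> fin_cases b <;>
    simp only [Matrix.of_apply, Matrix.cons_val', Matrix.cons_val_zero, Matrix.cons_val_one,
      Matrix.head_cons, Matrix.empty_val', Matrix.cons_val_fin_one, Matrix.head_fin_const,
      Fin.zero_eta, Fin.mk_one]
  · ring
  · ring
  · ring
  · linear_combination ((-1 : ℂ)) * Complex.I_mul_I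

lemma Sconj2_6 : pauli 2 * !![0, 0; 0, 1] * pauli 2 = !![1, 0; 0, 0] := by
  rw [pauli2, Matrix.mul_fin_two, Matrix.mul_fin_two]
  ext a b
  fin_cases a <;> fin_cases b <;>
    simp only [Matrix.of_apply, Matrix.cons_val', Matrix.cons_val_zero, Matrix.cons_val_one,
      Matrix.head_cons, Matrix.empty_val', Matrix.cons_val_fin_one, Matrix.head_fin_const,
      Fin.zero_eta, Fin.mk_one]
  · linear_combination ((-1 : ℂ)) * Complex.I_mul_I
  · ring
  · ring
  · ring

lemma Sconj3_1 : pauli 3 * !![1/2, (r:ℂ)/2; (r:ℂ)/2, 1/2] * pauli 3 = !![1/2, -((r:ℂ)/2); -((r:ℂ)/2), 1/2] := by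
  rw [pauli3, Matrix.mul_fin_two, Matrix.mul_fin_two]
  ext a b
  fin_cases a <;> fin_cases b <;>
    simp only [Matrix.of_apply, Matrix.cons_val', Matrix.cons_val_zero, Matrix.cons_val_one,
      Matrix.head_cons, Matrix.empty_val', Matrix.cons_val_fin_one, Matrix.head_fin_const,
      Fin.zero_eta, Fin.mk_one]
  · ring
  · ring
  · ring
  · ring

lemma Sconj3_2 : pauli 3 * !![1/2, -((r:ℂ)/2); -((r:ℂ)/2), 1/2] * pauli 3 = !![1/2, (r:ℂ)/2; (r:ℂ)/2, 1/2] := by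
  rw [pauli3, Matrix.mul_fin_two, Matrix.mul_fin_two]
  ext a b
  fin_cases a <;> fin_cases b <;>
    simp only [Matrix.of_apply, Matrix.cons_val', Matrix.cons_val_zero, Matrix.cons_val_one,
      Matrix.head_cons, Matrix.empty_val', Matrix.cons_val_fin_one, Matrix.head_fin_const,
      Fin.zero_eta, Fin.mk_one]
  · ring
  · ring
  · ring
  · ring

lemma Sconj3_3 : pauli 3 * !![1/2, -((r:ℂ) * Complex.I/2); (r:ℂ) * Complex.I/2, 1/2] * pauli 3 = !![1/2, (r:ℂ) * Complex.I/2; -((r:ℂ) * Complex.I/2), 1/2] := by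
  rw [pauli3, Matrix.mul_fin_two, Matrix.mul_fin_two]
  ext a b
  fin_cases a <;> fin_cases b <;>
    simp only [Matrix.of_apply, Matrix.cons_val', Matrix.cons_val_zero, Matrix.cons_val_one,
      Matrix.head_cons, Matrix.empty_val', Matrix.cons_val_fin_one, Matrix.head_fin_const,
      Fin.zero_eta, Fin.mk_one]
  · ring
  · ring
  · ring
  · ring

lemma Sconj3_4 : pauli 3 * !![1/2, (r:ℂ) * Complex.I/2; -((r:ℂ) * Complex.I/2), 1/2] * pauli 3 = !![1/2, -((r:ℂ) * Complex.I/2); (r:ℂ) * Complex.I/2, 1/2] := by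
  rw [pauli3, Matrix.mul_fin_two, Matrix.mul_fin_two]
  ext a b
  fin_cases a <;> fin_cases b <;>
    simp only [Matrix.of_apply, Matrix.cons_val', Matrix.cons_val_zero, Matrix.cons_val_one,
      Matrix.head_cons, Matrix.empty_val', Matrix.cons_val_fin_one, Matrix.head_fin_const,
      Fin.zero_eta, Fin.mk_one]
  · ring
  · ring
  · ring
  · ring

lemma Sconj3_5 : pauli 3 * !![1, 0; 0, 0] * pauli 3 = !![1, 0; 0, 0] := by
  rw [pauli3, Matrix.mul_fin_two, Matrix.mul_fin_two]
  ext a b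
  fin_cases a <;> fin_cases b <;>
    simp only [Matrix.of_apply, Matrix.cons_val', Matrix.cons_val_zero, Matrix.cons_val_one,
      Matrix.head_cons, Matrix.empty_val', Matrix.cons_val_fin_one, Matrix.head_fin_const,
      Fin.zero_eta, Fin.mk_one]
  · ring
  · ring
  · ring
  · ring

lemma Sconj3_6 : pauli 3 * !![0, 0; 0, 1] * pauli 3 = !![0, 0; 0, 1] := by
  rw [pauli3, Matrix.mul_fin_two, Matrix.mul_fin_two]
  ext a b
  fin_cases a <;> fin_cases b <;>
    simp only [Matrix.of_apply, Matrix.cons_val', Matrix.cons_val_zero, Matrix.cons_val_one,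
      Matrix.head_cons, Matrix.empty_val', Matrix.cons_val_fin_one, Matrix.head_fin_const,
      Fin.zero_eta, Fin.mk_one]
  · ring
  · ring
  · ring
  · ring
lemma LsigmaT (μ : ZMod 4) {om : Matrix (Fin 2) (Fin 2) ℂ} (h : om ∈ Ω) :
    pauli μ * omᵀ * pauli μ ∈ Ω := by
  have hall : ∀ ν : ZMod 4, ν = 0 ∨ ν = 1 ∨ ν = 2 ∨ ν = 3 := by decide
  rcases hall μ with rfl|rfl|rfl|rfl <;>
    rcases omega_cases h with rfl|rfl|rfl|rfl|rfl|rfl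
  · rw [Tlem1, Sconj0_1]; exact memΩ1
  · rw [Tlem2, Sconj0_2]; exact memΩ2
  · rw [Tlem3, Sconj0_4]; exact memΩ4
  · rw [Tlem4, Sconj0_3]; exact memΩ3
  · rw [Tlem5, Sconj0_5]; exact memΩ5
  · rw [Tlem6, Sconj0_6]; exact memΩ6
  · rw [Tlem1, Sconj1_1]; exact memΩ1
  · rw [Tlem2, Sconj1_2]; exact memΩ2
  · rw [Tlem3, Sconj1_4]; exact memΩ3
  · rw [Tlem4, Sconj1_3]; exact memΩ4
  · rw [Tlem5, Sconj1_5]; exact memΩ6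
  · rw [Tlem6, Sconj1_6]; exact memΩ5
  · rw [Tlem1, Sconj2_1]; exact memΩ2
  · rw [Tlem2, Sconj2_2]; exact memΩ1
  · rw [Tlem3, Sconj2_4]; exact memΩ4
  · rw [Tlem4, Sconj2_3]; exact memΩ3
  · rw [Tlem5, Sconj2_5]; exact memΩ6
  · rw [Tlem6, Sconj2_6]; exact memΩ5
  · rw [Tlem1, Sconj3_1]; exact memΩ2
  · rw [Tlem2, Sconj3_2]; exact memΩ1
  · rw [Tlem3, Sconj3_4]; exact memΩ3
  · rw [Tlem4, Sconj3_3]; exact memΩ4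
  · rw [Tlem5, Sconj3_5]; exact memΩ5
  · rw [Tlem6, Sconj3_6]; exact memΩ6

end AUX5
section AUX6
open Matrix Kronecker Complex

lemma pauli_herm (μ : ZMod 4) : (pauli μ)ᴴ = pauli μ := by
  have hall : ∀ ν : ZMod 4, ν = 0 ∨ ν = 1 ∨ ν = 2 ∨ ν = 3 := by decide
  rcases hall μ with rfl|rfl|rfl|rfl
  · rw [pauli0, Matrix.conjTranspose_one]
  · rw [pauli1]
    ext a b
    fin_cases a <;> fin_cases b <;> simp
  · rw [pauli2]
    ext a b
    fin_cases a <;> fin_cases b <;> simp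
  · rw [pauli3]
    ext a b
    fin_cases a <;> fin_cases b <;> simp

lemma sigma_red (μ : ZMod 4) (D X Y : Matrix (Fin 2) (Fin 2) ℂ) :
    Matrix.trace (pauli μ * D * X * (pauli μ * D)ᴴ * Y)
      = Matrix.trace (D * X * Dᴴ * (pauli μ * Y * pauli μ)) := by
  rw [Matrix.conjTranspose_mul, pauli_herm]
  have e : pauli μ * D * X * (Dᴴ * pauli μ) * Y
      = pauli μ * (D * X * Dᴴ * (pauli μ * Y)) := by
    simp only [Matrix.mul_assoc]
  rw [e, Matrix.trace_mul_comm]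
  simp only [Matrix.mul_assoc]

lemma RT : Rᵀ = R := by
  rw [R]; ext a b; fin_cases a <;> fin_cases b <;> rfl

lemma RHT : (Rᴴ)ᵀ = Rᴴ := by
  rw [RH_eq]; ext a b; fin_cases a <;> fin_cases b <;> rfl

lemma trans_conj (om : Matrix (Fin 2) (Fin 2) ℂ) :
    (R * om * Rᴴ)ᵀ = Rᴴ * omᵀ * R := by
  rw [Matrix.transpose_mul, Matrix.transpose_mul, RT, RHT]
  simp only [Matrix.mul_assoc]

lemma endL {om1 Z : Matrix (Fin 2) (Fin 2) ℂ} (h1 : om1 ∈ Ω) (hZ : Z ∈ Ω) :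
    ∃ t : ℝ, 0 ≤ t ∧ Matrix.trace (R * om1 * Rᴴ * Z) = (t : ℂ) := by
  rw [Matrix.trace_mul_comm]
  exact L4 hZ h1

lemma endL2 {om1 om2 : Matrix (Fin 2) (Fin 2) ℂ} (h1 : om1 ∈ Ω) (h2 : om2 ∈ Ω) :
    ∃ t : ℝ, 0 ≤ t ∧ Matrix.trace (om1 * (Rᴴ * om2 * R)) = (t : ℂ) := by
  have e : om1 * (Rᴴ * om2 * R) = om1 * Rᴴ * om2 * R := by
    simp only [Matrix.mul_assoc]
  rw [e, Matrix.trace_mul_comm]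
  have e2 : R * (om1 * Rᴴ * om2) = R * om1 * Rᴴ * om2 := by
    simp only [Matrix.mul_assoc]
  rw [e2]
  exact endL h1 h2

lemma main12core {om Y : Matrix (Fin 2) (Fin 2) ℂ} (hom : om ∈ Ω) (hY : Y ∈ Ω) (k : ℕ) :
    ∃ t : ℝ, 0 ≤ t ∧
      Matrix.trace (R ^ (1 + 2 * k) * om * (R ^ (1 + 2 * k))ᴴ * Y) = (t : ℂ) := by
  rw [pow_add, pow_one]
  have cf : R * R ^ (2 * k) * om * (R * R ^ (2 * k))ᴴ
      = R * (R ^ (2 * k) * om * (R ^ (2 * k))ᴴ) * Rᴴ := by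
    rw [Matrix.conjTranspose_mul]
    simp only [Matrix.mul_assoc]
  rw [cf]
  exact endL (LbPow hom k) hY

lemma main12 (μ : ZMod 4) (m : ZMod 8) (hm : m ∈ ({1, 3, 5, 7} : Set (ZMod 8)))
    {om om' : Matrix (Fin 2) (Fin 2) ℂ} (hom : om ∈ Ω) (hom' : om' ∈ Ω) :
    ∃ t : ℝ, 0 ≤ t ∧
      Matrix.trace ((pauli μ * R ^ m.val) * om * (pauli μ * R ^ m.val)ᴴ * om'ᵀ)
        = (t : ℂ) := by
  rw [sigma_red]
  have hY : pauli μ * om'ᵀ * pauli μ ∈ Ω := LsigmaT μ hom'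
  simp only [Set.mem_insert_iff, Set.mem_singleton_iff] at hm
  rcases hm with rfl|rfl|rfl|rfl
  · rw [show ((1 : ZMod 8)).val = 1 + 2 * 0 from rfl]
    exact main12core hom hY 0
  · rw [show ((3 : ZMod 8)).val = 1 + 2 * 1 from rfl]
    exact main12core hom hY 1
  · rw [show ((5 : ZMod 8)).val = 1 + 2 * 2 from rfl]
    exact main12core hom hY 2
  · rw [show ((7 : ZMod 8)).val = 1 + 2 * 3 from rfl]
    exact main12core hom hY 3
end AUX6
section AUX7
open Matrix Kronecker Complex

lemma comm3H : pauli 3 * Rᴴ = Rᴴ * pauli 3 := by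
  rw [pauli3, RH_eq, Matrix.mul_fin_two, Matrix.mul_fin_two]
  ext a b
  fin_cases a <;> fin_cases b <;> simp <;> try ring
lemma comm3R : R * pauli 3 = pauli 3 * R := by
  rw [pauli3, R, Matrix.mul_fin_two, Matrix.mul_fin_two]
  ext a b
  fin_cases a <;> fin_cases b <;> simp <;> try ring
lemma comm1H : pauli 1 * Rᴴ = R * pauli 1 := by
  rw [pauli1, RH_eq, R, Matrix.mul_fin_two, Matrix.mul_fin_two]
  ext a b
  fin_cases a <;> fin_cases b <;> simp <;> try ring
lemma comm1R : R * pauli 1 = pauli 1 * Rᴴ := comm1H.symm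
lemma comm1R' : Rᴴ * pauli 1 = pauli 1 * R := by
  rw [pauli1, RH_eq, R, Matrix.mul_fin_two, Matrix.mul_fin_two]
  ext a b
  fin_cases a <;> fin_cases b <;> simp <;> try ring
lemma comm2H : pauli 2 * Rᴴ = R * pauli 2 := by
  rw [pauli2, RH_eq, R, Matrix.mul_fin_two, Matrix.mul_fin_two]
  ext a b
  fin_cases a <;> fin_cases b <;> simp <;> try ring
lemma comm2R' : Rᴴ * pauli 2 = pauli 2 * R := by
  rw [pauli2, RH_eq, R, Matrix.mul_fin_two, Matrix.mul_fin_two]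
  ext a b
  fin_cases a <;> fin_cases b <;> simp <;> try ring

lemma sand_diag3 (Z : Matrix (Fin 2) (Fin 2) ℂ) :
    pauli 3 * (Rᴴ * Z * R) * pauli 3 = Rᴴ * (pauli 3 * Z * pauli 3) * R := by
  rw [RH_eq, R, pauli3]
  ext a b
  fin_cases a <;> fin_cases b <;>
    simp only [Matrix.mul_apply, Fin.sum_univ_two, Matrix.of_apply, Matrix.cons_val', Matrix.cons_val_zero, Matrix.cons_val_one,
      Matrix.head_cons, Matrix.empty_val', Matrix.cons_val_fin_one, Matrix.head_fin_const,
      Fin.zero_eta, Fin.mk_one] <;> ring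

lemma sand_off1 (Z : Matrix (Fin 2) (Fin 2) ℂ) :
    pauli 1 * (Rᴴ * Z * R) * pauli 1 = R * (pauli 1 * Z * pauli 1) * Rᴴ := by
  rw [RH_eq, R, pauli1]
  ext a b
  fin_cases a <;> fin_cases b <;>
    simp only [Matrix.mul_apply, Fin.sum_univ_two, Matrix.of_apply, Matrix.cons_val', Matrix.cons_val_zero, Matrix.cons_val_one,
      Matrix.head_cons, Matrix.empty_val', Matrix.cons_val_fin_one, Matrix.head_fin_const,
      Fin.zero_eta, Fin.mk_one] <;> ring

lemma sand_off2 (Z : Matrix (Fin 2) (Fin 2) ℂ) :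
    pauli 2 * (Rᴴ * Z * R) * pauli 2 = R * (pauli 2 * Z * pauli 2) * Rᴴ := by
  rw [RH_eq, R, pauli2]
  ext a b
  fin_cases a <;> fin_cases b <;>
    simp only [Matrix.mul_apply, Fin.sum_univ_two, Matrix.of_apply, Matrix.cons_val', Matrix.cons_val_zero, Matrix.cons_val_one,
      Matrix.head_cons, Matrix.empty_val', Matrix.cons_val_fin_one, Matrix.head_fin_const,
      Fin.zero_eta, Fin.mk_one] <;> ring

lemma main21core {om Y : Matrix (Fin 2) (Fin 2) ℂ} (hom : om ∈ Ω) (hY : Y ∈ Ω) (k : ℕ) :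
    ∃ t : ℝ, 0 ≤ t ∧
      Matrix.trace (R ^ (2 * k) * om * (R ^ (2 * k))ᴴ * (Rᴴ * Y * R)) = (t : ℂ) := by
  have e : R ^ (2 * k) * om * (R ^ (2 * k))ᴴ * (Rᴴ * Y * R)
      = (R ^ (2 * k) * om * (R ^ (2 * k))ᴴ) * (Rᴴ * Y * R) := rfl
  rw [e]
  exact endL2 (LbPow hom k) hY

lemma main21core' {om Y : Matrix (Fin 2) (Fin 2) ℂ} (hom : om ∈ Ω) (hY : Y ∈ Ω) (k : ℕ) :
    ∃ t : ℝ, 0 ≤ t ∧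
      Matrix.trace (R ^ (2 * k) * om * (R ^ (2 * k))ᴴ * (R * Y * Rᴴ)) = (t : ℂ) := by
  exact L4 (LbPow hom k) hY

lemma main21 (μ : ZMod 4) (m : ZMod 8) (hm : m ∈ ({1, 3, 5, 7} : Set (ZMod 8)))
    {om om' : Matrix (Fin 2) (Fin 2) ℂ} (hom : om ∈ Ω) (hom' : om' ∈ Ω) :
    ∃ t : ℝ, 0 ≤ t ∧
      Matrix.trace ((pauli μ * R ^ m.val) * (R * om * Rᴴ) * (pauli μ * R ^ m.val)ᴴ
        * (R * om' * Rᴴ)ᵀ) = (t : ℂ) := by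
  rw [trans_conj, sigma_red]
  have cg : ∀ v : ℕ, R ^ v * (R * om * Rᴴ) * (R ^ v)ᴴ = R ^ (v + 1) * om * (R ^ (v + 1))ᴴ := by
    intro v
    rw [pow_succ]
    simp only [Matrix.conjTranspose_mul, Matrix.mul_assoc]
  simp only [Set.mem_insert_iff, Set.mem_singleton_iff] at hm
  have hall : ∀ ν : ZMod 4, ν = 0 ∨ ν = 1 ∨ ν = 2 ∨ ν = 3 := by decide
  rcases hall μ with rfl|rfl|rfl|rfl <;> rcases hm with rfl|rfl|rfl|rfl <;>
    [rw [show ((1 : ZMod 8)).val = 1 from rfl, cg 1, show (1:ℕ)+1 = 2*1 from rfl];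
     rw [show ((3 : ZMod 8)).val = 3 from rfl, cg 3, show (3:ℕ)+1 = 2*2 from rfl];
     rw [show ((5 : ZMod 8)).val = 5 from rfl, cg 5, show (5:ℕ)+1 = 2*3 from rfl];
     rw [show ((7 : ZMod 8)).val = 7 from rfl, cg 7, show (7:ℕ)+1 = 2*4 from rfl];
     rw [show ((1 : ZMod 8)).val = 1 from rfl, cg 1, show (1:ℕ)+1 = 2*1 from rfl];
     rw [show ((3 : ZMod 8)).val = 3 from rfl, cg 3, show (3:ℕ)+1 = 2*2 from rfl];
     rw [show ((5 : ZMod 8)).val = 5 from rfl, cg 5, show (5:ℕ)+1 = 2*3 from rfl];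
     rw [show ((7 : ZMod 8)).val = 7 from rfl, cg 7, show (7:ℕ)+1 = 2*4 from rfl];
     rw [show ((1 : ZMod 8)).val = 1 from rfl, cg 1, show (1:ℕ)+1 = 2*1 from rfl];
     rw [show ((3 : ZMod 8)).val = 3 from rfl, cg 3, show (3:ℕ)+1 = 2*2 from rfl];
     rw [show ((5 : ZMod 8)).val = 5 from rfl, cg 5, show (5:ℕ)+1 = 2*3 from rfl];
     rw [show ((7 : ZMod 8)).val = 7 from rfl, cg 7, show (7:ℕ)+1 = 2*4 from rfl];
     rw [show ((1 : ZMod 8)).val = 1 from rfl, cg 1, show (1:ℕ)+1 = 2*1 from rfl];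
     rw [show ((3 : ZMod 8)).val = 3 from rfl, cg 3, show (3:ℕ)+1 = 2*2 from rfl];
     rw [show ((5 : ZMod 8)).val = 5 from rfl, cg 5, show (5:ℕ)+1 = 2*3 from rfl];
     rw [show ((7 : ZMod 8)).val = 7 from rfl, cg 7, show (7:ℕ)+1 = 2*4 from rfl]]
  · rw [pauli0, Matrix.one_mul, Matrix.mul_one]
    exact main21core hom (transΩ hom') 1
  · rw [pauli0, Matrix.one_mul, Matrix.mul_one]
    exact main21core hom (transΩ hom') 2
  · rw [pauli0, Matrix.one_mul, Matrix.mul_one]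
    exact main21core hom (transΩ hom') 3
  · rw [pauli0, Matrix.one_mul, Matrix.mul_one]
    exact main21core hom (transΩ hom') 4
  · rw [sand_off1]
    exact main21core' hom (LsigmaT 1 hom') 1
  · rw [sand_off1]
    exact main21core' hom (LsigmaT 1 hom') 2
  · rw [sand_off1]
    exact main21core' hom (LsigmaT 1 hom') 3
  · rw [sand_off1]
    exact main21core' hom (LsigmaT 1 hom') 4
  · rw [sand_off2]
    exact main21core' hom (LsigmaT 2 hom') 1
  · rw [sand_off2]
    exact main21core' hom (LsigmaT 2 hom') 2
  · rw [sand_off2]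
    exact main21core' hom (LsigmaT 2 hom') 3
  · rw [sand_off2]
    exact main21core' hom (LsigmaT 2 hom') 4
  · rw [sand_diag3]
    exact main21core hom (LsigmaT 3 hom') 1
  · rw [sand_diag3]
    exact main21core hom (LsigmaT 3 hom') 2
  · rw [sand_diag3]
    exact main21core hom (LsigmaT 3 hom') 3
  · rw [sand_diag3]
    exact main21core hom (LsigmaT 3 hom') 4
end AUX7
section AUX8
open Matrix Kronecker Complex
set_option maxHeartbeats 1000000 in
lemma PhiProj_apply (μ : ZMod 4) (m : ZMod 8) (p q : Fin 2 × Fin 2) :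
    PhiProj μ m p q = (starRingEnd ℂ) ((pauli μ * R ^ m.val) p.2 p.1)
      * ((pauli μ * R ^ m.val) q.2 q.1) / 2 := by
  obtain ⟨p1, p2⟩ := p
  obtain ⟨q1, q2⟩ := q
  have h2 : ((Real.sqrt 2 : ℝ) : ℂ)⁻¹ ^ 2 = (2:ℂ)⁻¹ := by
    rw [sq, ← mul_inv, ← Complex.ofReal_mul, Real.mul_self_sqrt (by norm_num)]
    norm_num
  simp only [PhiProj, PΦ, bell, Matrix.mul_apply, Fintype.sum_prod_type, Fin.sum_univ_two,
    kroneckerMap_apply, Matrix.of_apply, Matrix.one_apply, Matrix.conjTranspose_apply]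
  fin_cases p1 <;> fin_cases p2 <;> fin_cases q1 <;> fin_cases q2 <;>
    simp [map_inv₀, Complex.conj_ofReal] <;>
    ring_nf <;> rw [h2] <;> ring

set_option maxHeartbeats 1000000 in
lemma L2gen (A B M : Matrix (Fin 2) (Fin 2) ℂ) :
    Matrix.trace ((A ⊗ₖ B) * Matrix.of (fun p q : Fin 2 × Fin 2 =>
        (starRingEnd ℂ) (M p.2 p.1) * M q.2 q.1 / 2))
      = (2:ℂ)⁻¹ * Matrix.trace (M * A * Mᴴ * Bᵀ) := by
  simp only [Matrix.trace, Matrix.diag, Matrix.mul_apply, Fintype.sum_prod_type,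
    Fin.sum_univ_two, kroneckerMap_apply, Matrix.of_apply, Matrix.conjTranspose_apply,
    Matrix.transpose_apply, Complex.star_def]
  ring

lemma PhiProj_eq (μ : ZMod 4) (m : ZMod 8) :
    PhiProj μ m = Matrix.of (fun p q : Fin 2 × Fin 2 =>
      (starRingEnd ℂ) ((pauli μ * R ^ m.val) p.2 p.1) * ((pauli μ * R ^ m.val) q.2 q.1) / 2) := by
  ext p q
  exact PhiProj_apply μ m p q

lemma L2 (A B : Matrix (Fin 2) (Fin 2) ℂ) (μ : ZMod 4) (m : ZMod 8) :
    Matrix.trace ((A ⊗ₖ B) * PhiProj μ m)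
      = (2:ℂ)⁻¹ * Matrix.trace ((pauli μ * R ^ m.val) * A *
          (pauli μ * R ^ m.val)ᴴ * Bᵀ) := by
  rw [PhiProj_eq, L2gen]

set_option maxHeartbeats 1000000 in
lemma L3gen (M N : Matrix (Fin 2) (Fin 2) ℂ) :
    Matrix.trace ((Matrix.of fun p q : Fin 2 × Fin 2 =>
        (starRingEnd ℂ) (M p.2 p.1) * M q.2 q.1 / 2) *
      (Matrix.of fun p q : Fin 2 × Fin 2 =>
        (starRingEnd ℂ) (N p.2 p.1) * N q.2 q.1 / 2))
      = (∑ i : Fin 2, ∑ j : Fin 2, M i j * (starRingEnd ℂ) (N i j)) *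
        (starRingEnd ℂ) (∑ i : Fin 2, ∑ j : Fin 2, M i j * (starRingEnd ℂ) (N i j)) / 4 := by
  simp only [Matrix.trace, Matrix.diag, Matrix.mul_apply, Fintype.sum_prod_type,
    Fin.sum_univ_two, Matrix.of_apply, map_add, _root_.map_mul, Complex.conj_conj]
  ring

lemma L3 (μ ν : ZMod 4) (m n : ZMod 8) :
    0 ≤ (Matrix.trace (PhiProj μ m * PhiProj ν n)).re := by
  rw [PhiProj_eq μ m, PhiProj_eq ν n, L3gen]
  set z := ∑ i : Fin 2, ∑ j : Fin 2, (pauli μ * R ^ m.val) i j *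
    (starRingEnd ℂ) ((pauli ν * R ^ n.val) i j)
  rw [Complex.mul_conj]
  have : ((Complex.normSq z : ℂ) / 4).re = Complex.normSq z / 4 := by
    rw [Complex.div_ofNat_re]
    simp
  rw [this]
  exact div_nonneg (Complex.normSq_nonneg z) (by norm_num)

end AUX8
open Matrix Kronecker Complex

/-- Bipartite positivity of oblate stabilizer theory at the level of
generators: for every d ∈ {ω ⊗ ω' : ω, ω' ∈ Ω} ∪ Φ and every
p ∈ {RωR† ⊗ Rω'R† : ω, ω' ∈ Ω} ∪ Φ, we have Re(tr(d·p)) ≥ 0. -/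
theorem stmt_6 :
    ∀ d ∈ ({x | ∃ ω ∈ Ω, ∃ ω' ∈ Ω, x = ω ⊗ₖ ω'} ∪ PhiSet),
    ∀ p ∈ ({x | ∃ ω ∈ Ω, ∃ ω' ∈ Ω, x = (R * ω * Rᴴ) ⊗ₖ (R * ω' * Rᴴ)} ∪ PhiSet),
      0 ≤ (Matrix.trace (d * p)).re := by

  rintro d hd p hp
  rcases hd with ⟨a, ha, b, hb, rfl⟩ | ⟨μ, m, hm, rfl⟩ <;>
    rcases hp with ⟨c, hc, e, he, rfl⟩ | ⟨ν, n, hn, rfl⟩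
  · rw [← Matrix.mul_kronecker_mul, Matrix.trace_kronecker]
    obtain ⟨t1, ht1, e1⟩ := L4 ha hc
    obtain ⟨t2, ht2, e2⟩ := L4 hb he
    rw [e1, e2, ← Complex.ofReal_mul, Complex.ofReal_re]
    exact mul_nonneg ht1 ht2
  · rw [L2]
    obtain ⟨t, ht, eq⟩ := main12 ν n hn ha hb
    rw [eq, show ((2:ℂ)⁻¹ * (t:ℂ)) = ((t/2 : ℝ) : ℂ) by push_cast; ring,
      Complex.ofReal_re]
    linarith
  · rw [Matrix.trace_mul_comm, L2]
    obtain ⟨t, ht, eq⟩ := main21 μ m hm hc he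
    rw [eq, show ((2:ℂ)⁻¹ * (t:ℂ)) = ((t/2 : ℝ) : ℂ) by push_cast; ring,
      Complex.ofReal_re]
    linarith
  · exact L3 μ ν m n
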